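/- Let Π ∈ Π_{q,r} and assume the generalized Schur complement Π|Π₂₂ is positive definite. Then Z ∈ Z_r⁺(Π) if and only if Z = −Π₂₂^† Π₂₁ + ((−Π₂₂)^†)^{1/2} S (Π|Π₂₂)^{1/2} + (I_r − Π₂₂^† Π₂₂) T for some matrices S, T ∈ ℝ^{r×q} with SᵀS ≺ I_q. Here M^{1/2} denotes the unique positive semidefinite square root of a positive semidefinite matrix M. -/

import Mathlib

open Matrix
open scoped Classical

/-- The Moore–Penrose pseudoinverse of a real matrix, defined via its four
characterizing Penrose conditions (which determine it uniquely). -/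
noncomputable def pinv {m n : ℕ} (A : Matrix (Fin m) (Fin n) ℝ) : Matrix (Fin n) (Fin m) ℝ :=
  if h : ∃ B : Matrix (Fin n) (Fin m) ℝ,
      A * B * A = A ∧ B * A * B = B ∧ (A * B)ᵀ = A * B ∧ (B * A)ᵀ = B * A
  then h.choose else 0

/-- The unique positive semidefinite square root of a positive semidefinite matrix
(defined by its characterizing property, which determines it uniquely). -/
noncomputable def msqrt {n : ℕ} (A : Matrix (Fin n) (Fin n) ℝ) : Matrix (Fin n) (Fin n) ℝ :=
  if h : ∃ B : Matrix (Fin n) (Fin n) ℝ, B.PosSemidef ∧ B * B = A then h.choose else 0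

/-- The quadratic matrix expression `[I; Z]ᵀ Π [I; Z]`. -/
noncomputable def qmi {q r : ℕ} (P : Matrix (Fin q ⊕ Fin r) (Fin q ⊕ Fin r) ℝ)
    (Z : Matrix (Fin r) (Fin q) ℝ) : Matrix (Fin q) (Fin q) ℝ :=
  (fromRows (1 : Matrix (Fin q) (Fin q) ℝ) Z)ᵀ * P * fromRows 1 Z

/-- The solution set `Z_r(Π)` of the nonstrict QMI. -/
def ZrSet {q r : ℕ} (P : Matrix (Fin q ⊕ Fin r) (Fin q ⊕ Fin r) ℝ) :
    Set (Matrix (Fin r) (Fin q) ℝ) := {Z | (qmi P Z).PosSemidef}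

/-- The solution set `Z_r⁺(Π)` of the strict QMI. -/
def ZrPlusSet {q r : ℕ} (P : Matrix (Fin q ⊕ Fin r) (Fin q ⊕ Fin r) ℝ) :
    Set (Matrix (Fin r) (Fin q) ℝ) := {Z | (qmi P Z).PosDef}

/-- The solution set `Z_r⁰(Π)` of the quadratic matrix equality. -/
def ZrZeroSet {q r : ℕ} (P : Matrix (Fin q ⊕ Fin r) (Fin q ⊕ Fin r) ℝ) :
    Set (Matrix (Fin r) (Fin q) ℝ) := {Z | qmi P Z = 0}

/-- Generalized Schur complement `Π|Π₂₂ = Π₁₁ − Π₁₂ Π₂₂^† Π₂₁`. -/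
noncomputable def schurC {q r : ℕ} (P : Matrix (Fin q ⊕ Fin r) (Fin q ⊕ Fin r) ℝ) :
    Matrix (Fin q) (Fin q) ℝ :=
  P.toBlocks₁₁ - P.toBlocks₁₂ * pinv P.toBlocks₂₂ * P.toBlocks₂₁

/-- Membership in the class `Π_{q,r}`: symmetric, `Π₂₂ ⪯ 0`, `Π|Π₂₂ ⪰ 0`,
and `ker Π₂₂ ⊆ ker Π₁₂`. -/
def memPi {q r : ℕ} (P : Matrix (Fin q ⊕ Fin r) (Fin q ⊕ Fin r) ℝ) : Prop :=
  P.IsSymm ∧ (-P.toBlocks₂₂).PosSemidef ∧ (schurC P).PosSemidef ∧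
    ∀ x : Fin r → ℝ, P.toBlocks₂₂ *ᵥ x = 0 → P.toBlocks₁₂ *ᵥ x = 0

/-!
Write `N = −Π₂₂ ⪰ 0` and `W = Z + Π₂₂^† Π₂₁`. The Penrose identities together with
`ker Π₂₂ ⊆ ker Π₁₂` complete the square: `[I; Z]ᵀ Π [I; Z] = Π|Π₂₂ − Wᵀ N W`.
For `W = (N^†)^{1/2} S (Π|Π₂₂)^{1/2} + (I − N^† N) T` one computes
`Π|Π₂₂ − Wᵀ N W = (Π|Π₂₂)^{1/2} (I − Sᵀ N^† N S) (Π|Π₂₂)^{1/2}`, and `I − N^† N` is an orthogonal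
projection, so `SᵀS ≺ I` makes this positive definite. Conversely every `W` has this form with
`T = W` and `S = N (N^†)^{1/2} W (Π|Π₂₂)^{-1/2}`, for which `N^† N S = S`.
The identities between `N`, `N^†` and `(N^†)^{1/2}` are computed in the functional calculus of `N`.
-/

open scoped MatrixOrder

section Penrose

variable {m n : Type*} [Fintype m] [Fintype n]

def IsPenroseInverse (A : Matrix m n ℝ) (B : Matrix n m ℝ) : Prop :=
  A * B * A = A ∧ B * A * B = B ∧ (A * B)ᵀ = A * B ∧ (B * A)ᵀ = B * A

theorem IsPenroseInverse.unique {A : Matrix m n ℝ} {B C : Matrix n m ℝ}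
    (hB : IsPenroseInverse A B) (hC : IsPenroseInverse A C) : B = C := by
  obtain ⟨b1, b2, b3, b4⟩ := hB
  obtain ⟨c1, c2, c3, c4⟩ := hC
  have hB_eq : B = B * (A * C) :=
    calc B = B * (A * B)ᵀ := by rw [b3, ← Matrix.mul_assoc, b2]
      _ = B * (A * C * A * B)ᵀ := by rw [c1]
      _ = B * (A * B)ᵀ * (A * C)ᵀ := by simp only [transpose_mul, Matrix.mul_assoc]
      _ = B * (A * C) := by rw [b3, c3, ← Matrix.mul_assoc B A B, b2]
  have hC_eq : C = B * A * C :=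
    calc C = (C * A)ᵀ * C := by rw [c4, c2]
      _ = (C * A * B * A)ᵀ * C := by rw [Matrix.mul_assoc C A B, Matrix.mul_assoc, b1]
      _ = (B * A)ᵀ * (C * A)ᵀ * C := by simp only [transpose_mul, Matrix.mul_assoc]
      _ = B * A * C := by rw [b4, c4, Matrix.mul_assoc (B * A), c2]
  rw [hB_eq, ← Matrix.mul_assoc, ← hC_eq]

theorem IsPenroseInverse.neg {A : Matrix m n ℝ} {B : Matrix n m ℝ} (h : IsPenroseInverse A B) :
    IsPenroseInverse (-A) (-B) := by
  simpa only [IsPenroseInverse, Matrix.neg_mul, Matrix.mul_neg, neg_neg, neg_inj] using h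

/-- The columns of `1 - B * A` lie in `ker A ⊆ ker C`. -/
theorem IsPenroseInverse.mul_mul_eq_of_ker_le {k : Type*} [DecidableEq n] {A : Matrix m n ℝ}
    {B : Matrix n m ℝ} (h : IsPenroseInverse A B) {C : Matrix k n ℝ}
    (hker : ∀ x, A *ᵥ x = 0 → C *ᵥ x = 0) : C * B * A = C := by
  have hA : A * (1 - B * A) = 0 := by
    rw [Matrix.mul_sub, Matrix.mul_one, ← Matrix.mul_assoc, h.1, sub_self]
  have hC : C * (1 - B * A) = 0 := by
    refine ext_iff_mulVec.mpr fun x => ?_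
    rw [zero_mulVec, ← mulVec_mulVec]
    exact hker _ (by rw [mulVec_mulVec, hA, zero_mulVec])
  rwa [Matrix.mul_sub, Matrix.mul_one, sub_eq_zero, eq_comm, ← Matrix.mul_assoc] at hC

theorem IsPenroseInverse.posSemidef_one_sub_mul [DecidableEq n] {A : Matrix m n ℝ}
    {B : Matrix n m ℝ} (h : IsPenroseInverse A B) : (1 - B * A).PosSemidef := by
  have hBA : B * A * (B * A) = B * A := by rw [← Matrix.mul_assoc, h.2.1]
  have hidem : (1 - B * A) * (1 - B * A) = 1 - B * A := by
    simp only [Matrix.mul_sub, Matrix.sub_mul, Matrix.one_mul, Matrix.mul_one, hBA, sub_self,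
      sub_zero]
  have hsymm : (1 - B * A)ᴴ = 1 - B * A := by
    rw [conjTranspose_eq_transpose_of_trivial, transpose_sub, transpose_one, h.2.2.2]
  have := posSemidef_conjTranspose_mul_self (1 - B * A)
  rwa [hsymm, hidem] at this

end Penrose

theorem IsPenroseInverse.pinv_eq {m n : ℕ} {A : Matrix (Fin m) (Fin n) ℝ}
    {B : Matrix (Fin n) (Fin m) ℝ} (h : IsPenroseInverse A B) : pinv A = B := by
  have hex : ∃ B, IsPenroseInverse A B := ⟨B, h⟩
  exact (dif_pos hex).trans (hex.choose_spec.unique h)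

section FunctionalCalculus

variable {n : ℕ}

theorem cfc_mul_cfc (A : Matrix (Fin n) (Fin n) ℝ) (f g : ℝ → ℝ) :
    cfc f A * cfc g A = cfc (fun x => f x * g x) A :=
  (cfc_mul f g A (A.finite_real_spectrum.continuousOn f)
    (A.finite_real_spectrum.continuousOn g)).symm

theorem transpose_cfc (A : Matrix (Fin n) (Fin n) ℝ) (f : ℝ → ℝ) : (cfc f A)ᵀ = cfc f A :=
  (cfc_predicate f A : IsSelfAdjoint (cfc f A))

/-- Relies on `0⁻¹ = 0` in `ℝ`: zero eigenvalues stay zero. -/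
theorem isPenroseInverse_cfc_inv {A : Matrix (Fin n) (Fin n) ℝ} (hA : A.IsHermitian) :
    IsPenroseInverse A (cfc (fun x : ℝ => x⁻¹) A) := by
  have h : IsPenroseInverse (cfc (fun x : ℝ => x) A) (cfc (fun x : ℝ => x⁻¹) A) := by
    have hinv (x : ℝ) : x⁻¹ * x * x⁻¹ = x⁻¹ := by simpa using mul_inv_mul_cancel x⁻¹
    refine ⟨?_, ?_, ?_, ?_⟩ <;> simp only [cfc_mul_cfc, transpose_cfc, mul_inv_mul_cancel, hinv]
  rwa [cfc_id' ℝ A hA.isSelfAdjoint] at h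

theorem pinv_eq_cfc_inv {A : Matrix (Fin n) (Fin n) ℝ} (hA : A.IsHermitian) :
    pinv A = cfc (fun x : ℝ => x⁻¹) A :=
  (isPenroseInverse_cfc_inv hA).pinv_eq

theorem isPenroseInverse_pinv {A : Matrix (Fin n) (Fin n) ℝ} (hA : A.IsHermitian) :
    IsPenroseInverse A (pinv A) :=
  pinv_eq_cfc_inv hA ▸ isPenroseInverse_cfc_inv hA

theorem transpose_pinv {A : Matrix (Fin n) (Fin n) ℝ} (hA : A.IsHermitian) :
    (pinv A)ᵀ = pinv A := by
  rw [pinv_eq_cfc_inv hA, transpose_cfc]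

theorem commute_pinv {A : Matrix (Fin n) (Fin n) ℝ} (hA : A.IsHermitian) :
    Commute (pinv A) A := by
  have h := cfc_commute_cfc (fun x : ℝ => x⁻¹) (fun x => x) A
  rwa [cfc_id' ℝ A hA.isSelfAdjoint, ← pinv_eq_cfc_inv hA] at h

theorem pinv_mul_self_mul {A : Matrix (Fin n) (Fin n) ℝ} (hA : A.IsHermitian) :
    pinv A * A * A = A := by
  rw [(commute_pinv hA).eq, (isPenroseInverse_pinv hA).1]

theorem transpose_msqrt (A : Matrix (Fin n) (Fin n) ℝ) : (msqrt A)ᵀ = msqrt A := by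
  unfold msqrt
  split_ifs with h
  · exact h.choose_spec.1.1
  · exact transpose_zero

theorem msqrt_eq_of_mul_self {A B : Matrix (Fin n) (Fin n) ℝ} (hB : B.PosSemidef)
    (h : B * B = A) : msqrt A = B := by
  have hex : ∃ B : Matrix (Fin n) (Fin n) ℝ, B.PosSemidef ∧ B * B = A := ⟨B, hB, h⟩
  obtain ⟨hC, hC2⟩ := hex.choose_spec
  refine (dif_pos hex).trans ?_
  rw [← CFC.sqrt_unique hC2 hC.nonneg, ← CFC.sqrt_unique h hB.nonneg]

theorem cfc_sqrt_mul_self {A : Matrix (Fin n) (Fin n) ℝ} (hA : A.PosSemidef) :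
    cfc Real.sqrt A * cfc Real.sqrt A = A := by
  rw [cfc_mul_cfc]
  conv_rhs => rw [← cfc_id' ℝ A hA.1.isSelfAdjoint]
  exact cfc_congr fun x hx => Real.mul_self_sqrt (spectrum_nonneg_of_nonneg hA.nonneg hx)

theorem msqrt_eq_cfc_sqrt {A : Matrix (Fin n) (Fin n) ℝ} (hA : A.PosSemidef) :
    msqrt A = cfc Real.sqrt A :=
  msqrt_eq_of_mul_self (cfc_nonneg fun _ _ => Real.sqrt_nonneg _).posSemidef
    (cfc_sqrt_mul_self hA)

theorem msqrt_pinv_eq_cfc {N : Matrix (Fin n) (Fin n) ℝ} (hN : N.PosSemidef) :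
    msqrt (pinv N) = cfc (fun x => √x⁻¹) N := by
  refine msqrt_eq_of_mul_self (cfc_nonneg fun _ _ => Real.sqrt_nonneg _).posSemidef ?_
  rw [cfc_mul_cfc, pinv_eq_cfc_inv hN.1]
  exact cfc_congr fun x hx =>
    Real.mul_self_sqrt (inv_nonneg.2 (spectrum_nonneg_of_nonneg hN.nonneg hx))

theorem msqrt_pinv_mul_mul_msqrt_pinv {N : Matrix (Fin n) (Fin n) ℝ} (hN : N.PosSemidef) :
    msqrt (pinv N) * N * msqrt (pinv N) = pinv N * N := by
  have hN' : cfc (fun x : ℝ => x) N = N := cfc_id' ℝ N hN.1.isSelfAdjoint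
  rw [msqrt_pinv_eq_cfc hN, pinv_eq_cfc_inv hN.1]
  conv_lhs => arg 1; arg 2; rw [← hN']
  conv_rhs => arg 2; rw [← hN']
  rw [cfc_mul_cfc, cfc_mul_cfc, cfc_mul_cfc]
  refine cfc_congr fun x hx => ?_
  rw [mul_right_comm, Real.mul_self_sqrt (inv_nonneg.2 (spectrum_nonneg_of_nonneg hN.nonneg hx))]

end FunctionalCalculus

section CompletionOfSquares

variable {q r : ℕ}

theorem qmi_eq_blocks (P : Matrix (Fin q ⊕ Fin r) (Fin q ⊕ Fin r) ℝ)
    (Y : Matrix (Fin r) (Fin q) ℝ) :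
    qmi P Y = P.toBlocks₁₁ + P.toBlocks₁₂ * Y + Yᵀ * P.toBlocks₂₁ + Yᵀ * P.toBlocks₂₂ * Y := by
  have h : qmi P Y = (fromRows (1 : Matrix (Fin q) (Fin q) ℝ) Y)ᵀ * P * fromRows 1 Y := rfl
  conv_rhs at h => rw [← fromBlocks_toBlocks P]
  -- the rectangular products in `qmi` elaborate with `CStarMatrix`'s `HMul` instance
  erw [h, transpose_fromRows, Matrix.mul_assoc, fromBlocks_mul_fromRows, fromCols_mul_fromRows]
  simp only [transpose_one, Matrix.one_mul, Matrix.mul_one, Matrix.mul_add, ← Matrix.mul_assoc]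
  abel

theorem qmi_eq_schurC_sub {P : Matrix (Fin q ⊕ Fin r) (Fin q ⊕ Fin r) ℝ} (hP : P.IsSymm)
    (hker : ∀ x, P.toBlocks₂₂ *ᵥ x = 0 → P.toBlocks₁₂ *ᵥ x = 0) (Y : Matrix (Fin r) (Fin q) ℝ) :
    qmi P Y = schurC P - (Y + pinv P.toBlocks₂₂ * P.toBlocks₂₁)ᵀ * (-P.toBlocks₂₂)
      * (Y + pinv P.toBlocks₂₂ * P.toBlocks₂₁) := by
  obtain ⟨-, h12, -, h22⟩ := isSymm_fromBlocks_iff.1 ((fromBlocks_toBlocks P).symm ▸ hP)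
  have h22' : P.toBlocks₂₂.IsHermitian := by
    rwa [IsHermitian, conjTranspose_eq_transpose_of_trivial]
  rw [qmi_eq_blocks, schurC]
  set K := pinv P.toBlocks₂₂
  have hK : Kᵀ = K := transpose_pinv h22'
  have e1 : P.toBlocks₁₂ * K * P.toBlocks₂₂ = P.toBlocks₁₂ :=
    (isPenroseInverse_pinv h22').mul_mul_eq_of_ker_le hker
  have e2 : P.toBlocks₂₂ * K * P.toBlocks₂₁ = P.toBlocks₂₁ := by
    simpa only [transpose_mul, hK, h12, h22.eq, Matrix.mul_assoc] using congrArg transpose e1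
  have hWt : (Y + K * P.toBlocks₂₁)ᵀ = Yᵀ + P.toBlocks₁₂ * K := by
    rw [transpose_add, transpose_mul, hK, ← h12, transpose_transpose]
  have hexpand : (Yᵀ + P.toBlocks₁₂ * K) * P.toBlocks₂₂ * (Y + K * P.toBlocks₂₁)
      = Yᵀ * P.toBlocks₂₂ * Y + Yᵀ * P.toBlocks₂₁ + P.toBlocks₁₂ * Y
        + P.toBlocks₁₂ * K * P.toBlocks₂₁ :=
    calc _ = Yᵀ * P.toBlocks₂₂ * Y + Yᵀ * (P.toBlocks₂₂ * K * P.toBlocks₂₁)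
          + P.toBlocks₁₂ * K * P.toBlocks₂₂ * Y
          + P.toBlocks₁₂ * K * P.toBlocks₂₂ * K * P.toBlocks₂₁ := by
          simp only [Matrix.add_mul, Matrix.mul_add, Matrix.mul_assoc]; abel
      _ = _ := by rw [e1, e2]
  rw [hWt, Matrix.mul_neg, Matrix.neg_mul, sub_neg_eq_add, hexpand]
  abel

end CompletionOfSquares

section QuadraticMatrixInequality

variable {q r : ℕ}

theorem sub_transpose_mul_mul_eq_conj {N : Matrix (Fin r) (Fin r) ℝ} (hN : N.PosSemidef)
    {C M : Matrix (Fin q) (Fin q) ℝ} (hM : Mᵀ = M) (hMC : M * M = C)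
    (S T : Matrix (Fin r) (Fin q) ℝ) :
    C - (msqrt (pinv N) * S * M + (1 - pinv N * N) * T)ᵀ * N
        * (msqrt (pinv N) * S * M + (1 - pinv N * N) * T)
      = M * (1 - Sᵀ * (pinv N * N) * S) * M := by
  have hP := isPenroseInverse_pinv hN.1
  have hGNG := msqrt_pinv_mul_mul_msqrt_pinv hN
  have hG := transpose_msqrt (pinv N)
  set G := msqrt (pinv N)
  set E := pinv N * N
  have hE : Eᵀ = E := hP.2.2.2
  have hNE : N * (1 - E) = 0 := by
    rw [Matrix.mul_sub, Matrix.mul_one, ← Matrix.mul_assoc, hP.1, sub_self]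
  have hEN : (1 - E) * N = 0 := by
    rw [Matrix.sub_mul, Matrix.one_mul, pinv_mul_self_mul hN.1, sub_self]
  have hNW : N * (G * S * M + (1 - E) * T) = N * (G * S * M) := by
    rw [Matrix.mul_add, ← Matrix.mul_assoc N (1 - E), hNE, Matrix.zero_mul, add_zero]
  have hWt : (G * S * M + (1 - E) * T)ᵀ = M * Sᵀ * G + Tᵀ * (1 - E) := by
    simp only [transpose_add, transpose_mul, transpose_sub, transpose_one, hG, hE, hM,
      Matrix.mul_assoc]
  rw [Matrix.mul_assoc, hNW, hWt, Matrix.add_mul, Matrix.mul_assoc Tᵀ,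
    ← Matrix.mul_assoc (1 - E) N, hEN, Matrix.zero_mul, Matrix.mul_zero, add_zero,
    show M * Sᵀ * G * (N * (G * S * M)) = M * (Sᵀ * (G * N * G) * S) * M by
      simp only [Matrix.mul_assoc],
    hGNG, ← hMC, Matrix.mul_sub, Matrix.sub_mul, Matrix.mul_one]

theorem posDef_sub_transpose_mul_mul_iff {N : Matrix (Fin r) (Fin r) ℝ} (hN : N.PosSemidef)
    {C : Matrix (Fin q) (Fin q) ℝ} (hC : C.PosDef) (W : Matrix (Fin r) (Fin q) ℝ) :
    (C - Wᵀ * N * W).PosDef ↔ ∃ S T : Matrix (Fin r) (Fin q) ℝ,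
      (1 - Sᵀ * S).PosDef ∧ W = msqrt (pinv N) * S * msqrt C + (1 - pinv N * N) * T := by
  have hMt := transpose_msqrt C
  have hMC : msqrt C * msqrt C = C := by
    rw [msqrt_eq_cfc_sqrt hC.posSemidef]; exact cfc_sqrt_mul_self hC.posSemidef
  have hMu : IsUnit (msqrt C) := isUnit_of_mul_isUnit_left (hMC ▸ hC.isUnit)
  have hconj (X : Matrix (Fin q) (Fin q) ℝ) : (msqrt C * X * msqrt C).PosDef ↔ X.PosDef := by
    simpa only [star_eq_conjTranspose, conjTranspose_eq_transpose_of_trivial, hMt] using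
      hMu.posDef_star_left_conjugate_iff (x := X)
  constructor
  · intro hW
    set S := N * msqrt (pinv N) * W * (msqrt C)⁻¹
    have hWS : W = msqrt (pinv N) * S * msqrt C + (1 - pinv N * N) * W := by
      rw [show msqrt (pinv N) * S * msqrt C
          = msqrt (pinv N) * N * msqrt (pinv N) * W * ((msqrt C)⁻¹ * msqrt C) by
            simp only [S, Matrix.mul_assoc],
        msqrt_pinv_mul_mul_msqrt_pinv hN, nonsing_inv_mul _ ((isUnit_iff_isUnit_det _).1 hMu),
        Matrix.mul_one, Matrix.sub_mul, Matrix.one_mul, add_sub_cancel]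
    have hES : pinv N * N * S = S := by
      simp only [S, ← Matrix.mul_assoc, pinv_mul_self_mul hN.1]
    have h := sub_transpose_mul_mul_eq_conj hN hMt hMC S W
    rw [← hWS, Matrix.mul_assoc Sᵀ, hES] at h
    exact ⟨S, W, (hconj _).1 (h ▸ hW), hWS⟩
  · rintro ⟨S, T, hS, rfl⟩
    rw [sub_transpose_mul_mul_eq_conj hN hMt hMC, hconj,
      show 1 - Sᵀ * (pinv N * N) * S = (1 - Sᵀ * S) + Sᵀ * (1 - pinv N * N) * S by
        rw [Matrix.mul_sub, Matrix.sub_mul, Matrix.mul_one]; abel]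
    refine hS.add_posSemidef ?_
    simpa only [conjTranspose_eq_transpose_of_trivial] using
      (isPenroseInverse_pinv hN.1).posSemidef_one_sub_mul.conjTranspose_mul_mul_same S

end QuadraticMatrixInequality

/-- Parameterization of `Z_r⁺(Π)` for `Π ∈ Π_{q,r}` with `Π|Π₂₂ ≻ 0`:
`Z ∈ Z_r⁺(Π)` iff `Z = −Π₂₂^†Π₂₁ + ((−Π₂₂)^†)^{1/2} S (Π|Π₂₂)^{1/2} + (I − Π₂₂^†Π₂₂)T`
for some `S, T` with `SᵀS ≺ I`. -/
theorem stmt_6 {q r : ℕ} (P : Matrix (Fin q ⊕ Fin r) (Fin q ⊕ Fin r) ℝ) (hP : memPi P)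
    (hschur : (schurC P).PosDef) (Z : Matrix (Fin r) (Fin q) ℝ) :
    Z ∈ ZrPlusSet P ↔ ∃ S T : Matrix (Fin r) (Fin q) ℝ,
      ((1 : Matrix (Fin q) (Fin q) ℝ) - Sᵀ * S).PosDef ∧
      Z = -(pinv P.toBlocks₂₂ * P.toBlocks₂₁)
          + msqrt (pinv (-P.toBlocks₂₂)) * S * msqrt (schurC P)
          + ((1 : Matrix (Fin r) (Fin r) ℝ) - pinv P.toBlocks₂₂ * P.toBlocks₂₂) * T := by
  obtain ⟨hsymm, hN, -, hker⟩ := hP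
  have hpinv : pinv P.toBlocks₂₂ = -pinv (-P.toBlocks₂₂) := by
    simpa only [neg_neg] using (isPenroseInverse_pinv hN.1).neg.pinv_eq
  have hE : pinv P.toBlocks₂₂ * P.toBlocks₂₂ = pinv (-P.toBlocks₂₂) * -P.toBlocks₂₂ := by
    rw [hpinv, neg_mul_comm]
  rw [ZrPlusSet, Set.mem_ofPred_eq, qmi_eq_schurC_sub hsymm hker,
    posDef_sub_transpose_mul_mul_iff hN hschur, hE]
  refine exists₂_congr fun S T => and_congr_right' ?_
  rw [add_assoc, eq_neg_add_iff_add_eq, add_comm]
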